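/- Fix n, m, p and let A be an n×n real matrix, B an n×m real matrix, C an m×n real matrix, P and Q symmetric positive definite n×n real matrices, and Γ a symmetric positive definite m×m real matrix, with Aᵀ P + P A = −Q and P B = Cᵀ. Let η : [0,∞) → ℝ^p be continuous and bounded, and let e_x : [0,∞) → ℝⁿ and Ξ̃ : [0,∞) → (m × p real matrices) be differentiable solutions of e_x' = A e_x + B (Ξ̃ η) and Ξ̃' = −Γ (C e_x) ηᵀ. Then e_x(t) → 0 as t → ∞ (and consequently C e_x(t) → 0). -/

import Mathlib

/-!
The Lyapunov function `V = e_xᵀ P e_x + tr(Ξ̃ᵀ Γ⁻¹ Ξ̃)` has `V̇ = -e_xᵀ Q e_x` along solutions: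
the Lyapunov equation turns the drift term into `-e_xᵀ Q e_x`, while `P B = Cᵀ` and the update
law make the two cross terms `± 2 (C e_x)ᵀ Ξ̃ η` cancel. Hence `V` is nonincreasing, so `e_x` and
`Ξ̃` stay bounded, and `g = e_xᵀ Q e_x ≥ 0` is integrable on `[0, ∞)`. Boundedness of `η` makes
`ė_x` bounded, so `e_x` is Lipschitz with values in a compact set and `g` is uniformly continuous.
Barbalat's lemma gives `g → 0`, and positive definiteness of `Q` gives `e_x → 0`.
-/

open Matrix Filter Set Topology MeasureTheory intervalIntegral

theorem tendsto_intervalIntegral_add_const_of_integrableOn {g : ℝ → ℝ} {a : ℝ}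
    (hint : IntegrableOn g (Ioi a)) (δ : ℝ) :
    Tendsto (fun t => ∫ u in t..t + δ, g u) atTop (𝓝 0) := by
  have hii : ∀ t ≥ a, IntervalIntegrable g volume a t := fun t ht =>
    (intervalIntegrable_iff_integrableOn_Ioc_of_le ht).2 (hint.mono_set Ioc_subset_Ioi_self)
  have := (intervalIntegral_tendsto_integral_Ioi a hint
    (tendsto_atTop_add_const_right atTop δ tendsto_id)).sub
    (intervalIntegral_tendsto_integral_Ioi a hint tendsto_id)
  rw [sub_self] at this
  refine this.congr' ?_
  filter_upwards [eventually_ge_atTop a, eventually_ge_atTop (a - δ)] with t ht htδ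
  exact integral_interval_sub_left (hii (t + δ) (by linarith)) (hii t ht)

/-- Barbalat's lemma. -/
theorem tendsto_zero_of_uniformContinuousOn_of_integrableOn {g : ℝ → ℝ} {a : ℝ}
    (hg : UniformContinuousOn g (Ici a)) (hint : IntegrableOn g (Ioi a)) :
    Tendsto g atTop (𝓝 0) := by
  rw [Metric.tendsto_atTop]
  intro ε hε
  obtain ⟨δ, hδ, hδg⟩ := Metric.uniformContinuousOn_iff_le.1 hg (ε / 2) (half_pos hε)
  obtain ⟨T, hT⟩ := eventually_atTop.1 <|
    Metric.tendsto_nhds.1 (tendsto_intervalIntegral_add_const_of_integrableOn hint δ)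
      (δ * (ε / 2)) (by positivity)
  refine ⟨max T a, fun t ht => ?_⟩
  have hta : a ≤ t := le_of_max_le_right ht
  -- On `[t, t + δ]` the function stays `ε / 2`-close to `g t`, while its integral there is small.
  have hclose : ‖∫ u in t..t + δ, (g u - g t)‖ ≤ ε / 2 * δ := by
    have := norm_integral_le_of_norm_le_const (a := t) (b := t + δ) (C := ε / 2)
      (f := fun u => g u - g t) fun u hu => by
        rw [uIoc_of_le (by linarith)] at hu
        rw [← dist_eq_norm]
        refine hδg u (hta.trans hu.1.le) t hta ?_
        rw [Real.dist_eq, abs_of_pos (by linarith [hu.1])]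
        linarith [hu.2]
    simpa [abs_of_pos hδ] using this
  have hsplit : ∫ u in t..t + δ, (g u - g t) = (∫ u in t..t + δ, g u) - δ * g t := by
    have hsub : uIcc t (t + δ) ⊆ Ici a := by
      rw [uIcc_of_le (by linarith)]; exact Icc_subset_Ici_self.trans (Ici_subset_Ici.2 hta)
    rw [integral_sub (hg.continuousOn.mono hsub).intervalIntegrable intervalIntegrable_const]
    simp
  have hsmall := hT t (le_of_max_le_left ht)
  rw [hsplit, Real.norm_eq_abs] at hclose
  rw [Real.dist_eq, sub_zero] at hsmall ⊢
  obtain ⟨h₁, h₂⟩ := abs_le.1 hclose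
  obtain ⟨h₃, h₄⟩ := abs_lt.1 hsmall
  have : |δ * g t| < δ * ε := abs_lt.2 ⟨by linarith, by linarith⟩
  rw [abs_mul, abs_of_pos hδ] at this
  exact lt_of_mul_lt_mul_left this hδ.le

section Dissipation

variable {V g : ℝ → ℝ} {a : ℝ}

theorem integral_eq_sub_of_hasDerivAt_neg (hV : ∀ t ≥ a, HasDerivAt V (-g t) t)
    (hg : ContinuousOn g (Ici a)) {b : ℝ} (hab : a ≤ b) : ∫ u in a..b, g u = V a - V b := by
  have hsub : uIcc a b ⊆ Ici a := by rw [uIcc_of_le hab]; exact Icc_subset_Ici_self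
  have := integral_eq_sub_of_hasDerivAt (fun u hu => hV u (hsub hu))
    ((hg.mono hsub).neg.intervalIntegrable)
  rw [intervalIntegral.integral_neg] at this
  linarith

theorem le_of_hasDerivAt_neg (hV : ∀ t ≥ a, HasDerivAt V (-g t) t)
    (hg : ContinuousOn g (Ici a)) (hg0 : ∀ t ≥ a, 0 ≤ g t) {b : ℝ} (hab : a ≤ b) :
    V b ≤ V a := by
  have := intervalIntegral.integral_nonneg (μ := volume) hab fun u hu => hg0 u hu.1
  rw [integral_eq_sub_of_hasDerivAt_neg hV hg hab] at this
  linarith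

theorem integrableOn_Ioi_of_hasDerivAt_neg (hV : ∀ t ≥ a, HasDerivAt V (-g t) t)
    (hg : ContinuousOn g (Ici a)) (hg0 : ∀ t ≥ a, 0 ≤ g t) (hV0 : ∀ t ≥ a, 0 ≤ V t) :
    IntegrableOn g (Ioi a) := by
  refine integrableOn_Ioi_of_intervalIntegral_norm_bounded (V a) a
    (fun t => (hg.mono Icc_subset_Ici_self).integrableOn_Icc.mono_set Ioc_subset_Icc_self)
    tendsto_id ?_
  filter_upwards [eventually_ge_atTop a] with t ht
  rw [id, integral_congr fun u hu => Real.norm_of_nonneg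
      (hg0 u (by rw [uIcc_of_le ht] at hu; exact hu.1)),
    integral_eq_sub_of_hasDerivAt_neg hV hg ht]
  linarith [hV0 t ht]

end Dissipation

theorem Continuous.comp_uniformContinuousOn_of_isBounded {α E F : Type*} [UniformSpace α]
    [PseudoMetricSpace E] [ProperSpace E] [UniformSpace F] {q : E → F} {f : α → E} {s : Set α}
    (hq : Continuous q) (hf : UniformContinuousOn f s) (hb : Bornology.IsBounded (f '' s)) :
    UniformContinuousOn (q ∘ f) s :=
  (hb.isCompact_closure.uniformContinuousOn_of_continuous hq.continuousOn).comp hf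
    ((mapsTo_image f s).mono_right subset_closure)

namespace Matrix

variable {ι κ ν : Type*} [Fintype ι] [Fintype κ] [Fintype ν]

theorem continuous_dotProduct_mulVec_self (M : Matrix ι ι ℝ) :
    Continuous fun x : ι → ℝ => x ⬝ᵥ M *ᵥ x := by
  fun_prop

theorem PosDef.dotProduct_mulVec_self_nonneg {M : Matrix ι ι ℝ} (hM : M.PosDef) (x : ι → ℝ) :
    0 ≤ x ⬝ᵥ M *ᵥ x := by
  simpa using hM.posSemidef.dotProduct_mulVec_nonneg x

theorem PosDef.exists_norm_sq_le_mul {M : Matrix ι ι ℝ} (hM : M.PosDef) :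
    ∃ c > 0, ∀ x : ι → ℝ, ‖x‖ ^ 2 ≤ c * (x ⬝ᵥ M *ᵥ x) := by
  obtain ⟨m, hm, hmin⟩ : ∃ m > 0, ∀ y ∈ Metric.sphere (0 : ι → ℝ) 1, m ≤ y ⬝ᵥ M *ᵥ y := by
    rcases (Metric.sphere (0 : ι → ℝ) 1).eq_empty_or_nonempty with h | h
    · exact ⟨1, one_pos, by simp [h]⟩
    obtain ⟨y₀, hy₀, hmin⟩ := (isCompact_sphere 0 1).exists_isMinOn h
      (continuous_dotProduct_mulVec_self M).continuousOn
    have hy₀0 : y₀ ≠ 0 := ne_zero_of_mem_unit_sphere ⟨y₀, hy₀⟩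
    exact ⟨_, by simpa using hM.dotProduct_mulVec_pos hy₀0, hmin⟩
  refine ⟨m⁻¹, inv_pos.2 hm, fun x => ?_⟩
  rcases eq_or_ne x 0 with rfl | hx
  · simp
  have hxn : 0 < ‖x‖ := norm_pos_iff.2 hx
  have := hmin (‖x‖⁻¹ • x) (by simp [norm_smul, hxn.ne'])
  rw [smul_dotProduct, mulVec_smul, dotProduct_smul, smul_eq_mul, smul_eq_mul, ← mul_assoc,
    ← sq, inv_pow, ← div_eq_inv_mul, le_div_iff₀ (by positivity)] at this
  rwa [le_inv_mul_iff₀ hm]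

theorem PosDef.isBounded_setOf_dotProduct_mulVec_le {M : Matrix ι ι ℝ} (hM : M.PosDef) (b : ℝ) :
    Bornology.IsBounded {x : ι → ℝ | x ⬝ᵥ M *ᵥ x ≤ b} := by
  obtain ⟨c, hc, hM⟩ := hM.exists_norm_sq_le_mul
  refine isBounded_iff_forall_norm_le.2 ⟨√(c * b), fun x hx => ?_⟩
  simpa using Real.abs_le_sqrt ((hM x).trans (mul_le_mul_of_nonneg_left hx hc.le))

theorem PosDef.tendsto_zero_of_tendsto_dotProduct_mulVec {α : Type*} {l : Filter α}
    {M : Matrix ι ι ℝ} (hM : M.PosDef) {f : α → ι → ℝ}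
    (h : Tendsto (fun a => f a ⬝ᵥ M *ᵥ f a) l (𝓝 0)) : Tendsto f l (𝓝 0) := by
  obtain ⟨c, hc, hM⟩ := hM.exists_norm_sq_le_mul
  refine tendsto_zero_iff_norm_tendsto_zero.2 <|
    squeeze_zero (fun _ => norm_nonneg _) (fun a => ?_) (by simpa using (h.const_mul c).sqrt)
  simpa using Real.abs_le_sqrt (hM (f a))

theorem IsSymm.dotProduct_mulVec_comm {M : Matrix ι ι ℝ} (hM : M.IsSymm) (v w : ι → ℝ) :
    v ⬝ᵥ M *ᵥ w = w ⬝ᵥ M *ᵥ v := by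
  rw [dotProduct_mulVec, dotProduct_comm, ← mulVec_transpose, hM.eq]

theorem dotProduct_mulVec_eq_sum (y : κ → ℝ) (M : Matrix κ ν ℝ) (e : ν → ℝ) :
    y ⬝ᵥ M *ᵥ e = ∑ j, e j * (Mᵀ j ⬝ᵥ y) := by
  simp [mulVec_eq_sum, sum_dotProduct, smul_dotProduct, dotProduct_comm y]

theorem norm_mulVec_le (M : Matrix ι κ ℝ) (v : κ → ℝ) :
    ‖M *ᵥ v‖ ≤ (∑ j, ‖Mᵀ j‖) * ‖v‖ := by
  rw [mulVec_eq_sum, Finset.sum_mul]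
  refine (norm_sum_le _ _).trans (Finset.sum_le_sum fun j _ => ?_)
  rw [op_smul_eq_smul, norm_smul, mul_comm]
  gcongr
  exact norm_le_pi_norm v j

end Matrix

section Derivatives

variable {ι κ : Type*} [Fintype ι] {t : ℝ}

theorem HasDerivAt.dotProduct {x y : ℝ → ι → ℝ} {x' y' : ι → ℝ}
    (hx : HasDerivAt x x' t) (hy : HasDerivAt y y' t) :
    HasDerivAt (fun s => x s ⬝ᵥ y s) (x' ⬝ᵥ y t + x t ⬝ᵥ y') t :=
  (HasDerivAt.fun_sum fun i _ => (hasDerivAt_pi.1 hx i).fun_mul (hasDerivAt_pi.1 hy i)).congr_deriv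
    Finset.sum_add_distrib

theorem HasDerivAt.matrix_mulVec (M : Matrix κ ι ℝ) {x : ℝ → ι → ℝ} {x' : ι → ℝ}
    (hx : HasDerivAt x x' t) : HasDerivAt (fun s => M *ᵥ x s) (M *ᵥ x') t :=
  hasDerivAt_pi.2 fun i =>
    HasDerivAt.fun_sum fun j _ => (hasDerivAt_pi.1 hx j).const_mul (M i j)

theorem HasDerivAt.dotProduct_mulVec_self {M : Matrix ι ι ℝ} (hM : M.IsSymm) {x : ℝ → ι → ℝ}
    {x' : ι → ℝ} (hx : HasDerivAt x x' t) :
    HasDerivAt (fun s => x s ⬝ᵥ M *ᵥ x s) (2 * (x t ⬝ᵥ M *ᵥ x')) t := by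
  convert hx.dotProduct (hx.matrix_mulVec M) using 1
  rw [hM.dotProduct_mulVec_comm x']
  ring

end Derivatives

section AdaptiveLyapunov

variable {ι κ ν : Type*} [Fintype ι] [Fintype κ] [Fintype ν]

/-- The paper's `V_w = e_xᵀ P e_x + tr(Ξ̃ᵀ Γ⁻¹ Ξ̃)`, the trace written as a sum over the columns
`Ξᵀ j` of `Ξ`. -/
noncomputable def adaptiveLyapunov [DecidableEq κ] (P : Matrix ι ι ℝ) (Γ : Matrix κ κ ℝ)
    (x : ι → ℝ) (Ξ : Matrix κ ν ℝ) : ℝ :=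
  x ⬝ᵥ P *ᵥ x + ∑ j, Ξᵀ j ⬝ᵥ Γ⁻¹ *ᵥ Ξᵀ j

theorem two_mul_dotProduct_mulVec_mulVec_of_lyapunov {A P Q : Matrix ι ι ℝ} (hP : P.IsSymm)
    (hLyap : Aᵀ * P + P * A = -Q) (x : ι → ℝ) :
    2 * (x ⬝ᵥ P *ᵥ (A *ᵥ x)) = -(x ⬝ᵥ Q *ᵥ x) := by
  have hAP : x ⬝ᵥ (Aᵀ * P) *ᵥ x = x ⬝ᵥ P *ᵥ (A *ᵥ x) := by
    rw [← mulVec_mulVec, dotProduct_mulVec, vecMul_transpose, hP.dotProduct_mulVec_comm]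
  rw [← dotProduct_neg, ← neg_mulVec, ← hLyap, add_mulVec, dotProduct_add, hAP, mulVec_mulVec]
  ring

theorem hasDerivAt_adaptiveLyapunov [DecidableEq κ] {A P Q : Matrix ι ι ℝ} {B : Matrix ι κ ℝ}
    {C : Matrix κ ι ℝ} {Γ : Matrix κ κ ℝ} (hP : P.IsSymm) (hΓ : Γ.PosDef)
    (hLyap : Aᵀ * P + P * A = -Q) (hPB : P * B = Cᵀ)
    {x : ℝ → ι → ℝ} {Ξ : ℝ → Matrix κ ν ℝ} {e : ν → ℝ} {t : ℝ}
    (hx : HasDerivAt x (A *ᵥ x t + B *ᵥ (Ξ t *ᵥ e)) t)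
    (hΞ : ∀ i j, HasDerivAt (fun s => Ξ s i j) (-(vecMulVec (Γ *ᵥ (C *ᵥ x t)) e) i j) t) :
    HasDerivAt (fun s => adaptiveLyapunov P Γ (x s) (Ξ s)) (-(x t ⬝ᵥ Q *ᵥ x t)) t := by
  set y := C *ᵥ x t
  have hΓs : Γ⁻¹.IsSymm := isHermitian_iff_isSymm.1 hΓ.inv.isHermitian
  have hΓΓ : Γ⁻¹ * Γ = 1 := nonsing_inv_mul Γ ((isUnit_iff_isUnit_det Γ).1 hΓ.isUnit)
  have hcol (j : ν) : HasDerivAt (fun s => (Ξ s)ᵀ j) (-e j • Γ *ᵥ y) t :=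
    hasDerivAt_pi.2 fun i => (hΞ i j).congr_deriv (by simp [vecMulVec_apply, mul_comm])
  refine ((hx.dotProduct_mulVec_self hP).add
    (HasDerivAt.fun_sum fun j _ => (hcol j).dotProduct_mulVec_self hΓs)).congr_deriv ?_
  -- Both cross terms equal `2 * (y ⬝ᵥ Ξ t *ᵥ e)`, with opposite signs.
  have hB : x t ⬝ᵥ P *ᵥ (B *ᵥ (Ξ t *ᵥ e)) = y ⬝ᵥ Ξ t *ᵥ e := by
    rw [mulVec_mulVec, hPB, dotProduct_mulVec, vecMul_transpose]
  have hcolV (j : ν) :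
      2 * ((Ξ t)ᵀ j ⬝ᵥ Γ⁻¹ *ᵥ (-e j • Γ *ᵥ y)) = -(2 * (e j * ((Ξ t)ᵀ j ⬝ᵥ y))) := by
    rw [mulVec_smul, mulVec_mulVec, hΓΓ, one_mulVec, dotProduct_smul, smul_eq_mul]
    ring
  simp_rw [hcolV]
  rw [mulVec_add, dotProduct_add, mul_add, two_mul_dotProduct_mulVec_mulVec_of_lyapunov hP hLyap,
    hB, Finset.sum_neg_distrib, ← Finset.mul_sum, dotProduct_mulVec_eq_sum y]
  ring

theorem adaptiveLyapunov_nonneg [DecidableEq κ] {P : Matrix ι ι ℝ} {Γ : Matrix κ κ ℝ}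
    (hP : P.PosDef) (hΓ : Γ.PosDef) (x : ι → ℝ) (Ξ : Matrix κ ν ℝ) :
    0 ≤ adaptiveLyapunov P Γ x Ξ :=
  add_nonneg (hP.dotProduct_mulVec_self_nonneg x)
    (Finset.sum_nonneg fun _ _ => hΓ.inv.dotProduct_mulVec_self_nonneg _)

theorem exists_norm_le_of_adaptiveLyapunov_le [DecidableEq κ] {P : Matrix ι ι ℝ}
    {Γ : Matrix κ κ ℝ} (hP : P.PosDef) (hΓ : Γ.PosDef) (b : ℝ) :
    ∃ R, ∀ (x : ι → ℝ) (Ξ : Matrix κ ν ℝ),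
      adaptiveLyapunov P Γ x Ξ ≤ b → ‖x‖ ≤ R ∧ ∀ j, ‖Ξᵀ j‖ ≤ R := by
  obtain ⟨R₁, hR₁⟩ := (hP.isBounded_setOf_dotProduct_mulVec_le b).exists_norm_le
  obtain ⟨R₂, hR₂⟩ := (hΓ.inv.isBounded_setOf_dotProduct_mulVec_le b).exists_norm_le
  have hP0 := hP.dotProduct_mulVec_self_nonneg
  have hΓ0 := hΓ.inv.dotProduct_mulVec_self_nonneg
  refine ⟨max R₁ R₂, fun x Ξ hV => ⟨(hR₁ x ?_).trans (le_max_left ..),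
    fun j => (hR₂ (Ξᵀ j) ?_).trans (le_max_right ..)⟩⟩ <;>
    simp only [adaptiveLyapunov, mem_ofPred_eq] at hV ⊢
  · linarith [Finset.sum_nonneg fun j (_ : j ∈ Finset.univ) => hΓ0 (Ξᵀ j)]
  · linarith [Finset.single_le_sum (fun j _ => hΓ0 (Ξᵀ j)) (Finset.mem_univ j), hP0 x]

theorem exists_norm_add_mulVec_mulVec_le (A : Matrix ι ι ℝ) (B : Matrix ι κ ℝ) (R : ℝ) :
    ∃ K, ∀ (x : ι → ℝ) (Ξ : Matrix κ ν ℝ) (e : ν → ℝ),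
      ‖x‖ ≤ R → (∀ j, ‖Ξᵀ j‖ ≤ R) → ‖e‖ ≤ R → ‖A *ᵥ x + B *ᵥ (Ξ *ᵥ e)‖ ≤ K := by
  refine ⟨(∑ j, ‖Aᵀ j‖) * R + (∑ k, ‖Bᵀ k‖) * (Fintype.card ν * R * R),
    fun x Ξ e hx hΞ he => ?_⟩
  have hR : 0 ≤ R := (norm_nonneg _).trans hx
  have hΞe : ‖Ξ *ᵥ e‖ ≤ Fintype.card ν * R * R := by
    refine (Ξ.norm_mulVec_le e).trans (mul_le_mul ?_ he (norm_nonneg _) (by positivity))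
    simpa using Finset.sum_le_sum fun j (_ : j ∈ Finset.univ) => hΞ j
  calc ‖A *ᵥ x + B *ᵥ (Ξ *ᵥ e)‖ ≤ ‖A *ᵥ x‖ + ‖B *ᵥ (Ξ *ᵥ e)‖ := norm_add_le _ _
    _ ≤ (∑ j, ‖Aᵀ j‖) * ‖x‖ + (∑ k, ‖Bᵀ k‖) * ‖Ξ *ᵥ e‖ :=
      add_le_add (A.norm_mulVec_le x) (B.norm_mulVec_le _)
    _ ≤ _ := by gcongr

end AdaptiveLyapunov

theorem stmt_13_general (n m p : ℕ)
    (A : Matrix (Fin n) (Fin n) ℝ) (B : Matrix (Fin n) (Fin m) ℝ)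
    (C : Matrix (Fin m) (Fin n) ℝ)
    (P Q : Matrix (Fin n) (Fin n) ℝ) (hP : P.PosDef) (hQ : Q.PosDef)
    (Γ : Matrix (Fin m) (Fin m) ℝ) (hΓ : Γ.PosDef)
    (hLyap : Aᵀ * P + P * A = -Q) (hPB : P * B = Cᵀ)
    (η : ℝ → Fin p → ℝ)
    (hηb : ∃ Cb, ∀ t ≥ (0 : ℝ), ‖η t‖ ≤ Cb)
    (ex : ℝ → Fin n → ℝ) (Ξ : ℝ → Matrix (Fin m) (Fin p) ℝ)
    (hex : ∀ t ≥ (0 : ℝ),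
      HasDerivAt ex (A.mulVec (ex t) + B.mulVec ((Ξ t).mulVec (η t))) t)
    (hΞ : ∀ t ≥ (0 : ℝ), ∀ i j, HasDerivAt (fun s => Ξ s i j)
      ((-(Matrix.vecMulVec (Γ.mulVec (C.mulVec (ex t))) (η t))) i j) t) :
    Tendsto ex atTop (nhds 0)
      ∧ Tendsto (fun t => C.mulVec (ex t)) atTop (nhds 0) := by
  obtain ⟨Cη, hCη⟩ := hηb
  set V := fun t => adaptiveLyapunov P Γ (ex t) (Ξ t)
  set g := fun t => ex t ⬝ᵥ Q *ᵥ ex t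
  have hV : ∀ t ≥ 0, HasDerivAt V (-g t) t := fun t ht =>
    hasDerivAt_adaptiveLyapunov (isHermitian_iff_isSymm.1 hP.isHermitian) hΓ hLyap hPB
      (hex t ht) (hΞ t ht)
  have hg : ContinuousOn g (Ici 0) := (continuous_dotProduct_mulVec_self Q).comp_continuousOn
    fun t ht => (hex t ht).continuousAt.continuousWithinAt
  have hg0 : ∀ t ≥ 0, 0 ≤ g t := fun t _ => hQ.dotProduct_mulVec_self_nonneg (ex t)
  obtain ⟨R, hR⟩ := exists_norm_le_of_adaptiveLyapunov_le (ν := Fin p) hP hΓ (V 0)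
  have hbdd : ∀ t ≥ 0, ‖ex t‖ ≤ R ∧ ∀ j, ‖(Ξ t)ᵀ j‖ ≤ R := fun t ht =>
    hR (ex t) (Ξ t) (le_of_hasDerivAt_neg hV hg hg0 ht)
  obtain ⟨K, hK⟩ := exists_norm_add_mulVec_mulVec_le (ν := Fin p) A B (max R Cη)
  have hex' : ∀ t ≥ 0, ‖A *ᵥ ex t + B *ᵥ (Ξ t *ᵥ η t)‖ ≤ K := fun t ht =>
    hK _ _ _ ((hbdd t ht).1.trans (le_max_left ..))
      (fun j => ((hbdd t ht).2 j).trans (le_max_left ..)) ((hCη t ht).trans (le_max_right ..))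
  have hlip : LipschitzOnWith K.toNNReal ex (Ici 0) :=
    (convex_Ici 0).lipschitzOnWith_of_nnnorm_hasDerivWithin_le
      (fun t ht => (hex t ht).hasDerivWithinAt)
      fun t ht => NNReal.coe_le_coe.1 <| (hex' t ht).trans K.le_coe_toNNReal
  have hguc : UniformContinuousOn g (Ici 0) :=
    (continuous_dotProduct_mulVec_self Q).comp_uniformContinuousOn_of_isBounded
      hlip.uniformContinuousOn <| isBounded_iff_forall_norm_le.2
        ⟨R, by rintro _ ⟨t, ht, rfl⟩; exact (hbdd t ht).1⟩
  have hex0 : Tendsto ex atTop (𝓝 0) := hQ.tendsto_zero_of_tendsto_dotProduct_mulVec <|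
    tendsto_zero_of_uniformContinuousOn_of_integrableOn hguc <|
      integrableOn_Ioi_of_hasDerivAt_neg hV hg hg0 fun t _ =>
        adaptiveLyapunov_nonneg hP hΓ (ex t) (Ξ t)
  exact ⟨hex0,
    ((continuous_const.matrix_mulVec continuous_id).tendsto' 0 0 (mulVec_zero C)).comp hex0⟩

/-- Synchronization conclusion of the passivity-recovered (non-SPR) design:
with `AᵀP + PA = −Q`, `PB = Cᵀ`, bounded continuous regressor `η`, and
solutions of `e_x' = A e_x + B Ξ̃ η`, `Ξ̃' = −Γ(C e_x)ηᵀ` on `[0,∞)`,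
one has `e_x(t) → 0` and consequently `C e_x(t) → 0`. -/
theorem stmt_13 (n m p : ℕ)
    (A : Matrix (Fin n) (Fin n) ℝ) (B : Matrix (Fin n) (Fin m) ℝ)
    (C : Matrix (Fin m) (Fin n) ℝ)
    (P Q : Matrix (Fin n) (Fin n) ℝ) (hP : P.PosDef) (hQ : Q.PosDef)
    (Γ : Matrix (Fin m) (Fin m) ℝ) (hΓ : Γ.PosDef)
    (hLyap : Aᵀ * P + P * A = -Q) (hPB : P * B = Cᵀ)
    (η : ℝ → Fin p → ℝ)
    (hηc : ContinuousOn η (Set.Ici 0))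
    (hηb : ∃ Cb, ∀ t ≥ (0 : ℝ), ‖η t‖ ≤ Cb)
    (ex : ℝ → Fin n → ℝ) (Ξ : ℝ → Matrix (Fin m) (Fin p) ℝ)
    (hex : ∀ t ≥ (0 : ℝ),
      HasDerivAt ex (A.mulVec (ex t) + B.mulVec ((Ξ t).mulVec (η t))) t)
    (hΞ : ∀ t ≥ (0 : ℝ), ∀ i j, HasDerivAt (fun s => Ξ s i j)
      ((-(Matrix.vecMulVec (Γ.mulVec (C.mulVec (ex t))) (η t))) i j) t) :
    Tendsto ex atTop (nhds 0)
      ∧ Tendsto (fun t => C.mulVec (ex t)) atTop (nhds 0) :=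
  stmt_13_general n m p A B C P Q hP hQ Γ hΓ hLyap hPB η hηb ex Ξ hex hΞ
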